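/- Corollary 2.1(b) (band-limited window). Fix t ∈ ℝ. Suppose x ∈ 𝓑_{ε1,ε2}, supp(ĝ) ⊆ [−α, α], the separation condition σ(t) ≥ 2α/(φ'_k(t) − φ'_{k−1}(t)) holds for all t and k = 1,…,K, and 2M(t)λ_0(t) ≤ μ(t). Let ε̃1 satisfy M(t)λ_0(t) ≤ ε̃1 ≤ μ(t) − M(t)λ_0(t), and for 1 ≤ ℓ ≤ K let η̂_ℓ(t) = argmax_{η ∈ 𝓖_{t,ℓ}} |Ṽ_x(t,η)|. Then for each ℓ = 1,…,K, |η̂_ℓ(t) − φ'_ℓ(t)| ≤ (1/σ(t)) · |ĝ|^{−1}(1 − 2 M(t)λ_0(t)/A_ℓ(t)). -/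

import Mathlib

open MeasureTheory Real

noncomputable section

/-- The adaptive short-time Fourier transform with time-varying window width `σ`. -/
def aSTFT (x : ℝ → ℂ) (g : ℝ → ℝ) (σ : ℝ → ℝ) (t η : ℝ) : ℂ :=
  ∫ τ : ℝ, x (t + τ) * (((σ t)⁻¹ * g (τ / σ t) : ℝ) : ℂ) *
    Complex.exp (-(2 * (π : ℂ) * η * τ) * Complex.I)

/-- The Fourier transform `ĝ` of the window `g`. -/
def hatg (g : ℝ → ℝ) (ξ : ℝ) : ℂ :=
  ∫ τ : ℝ, (g τ : ℂ) * Complex.exp (-(2 * (π : ℂ) * ξ * τ) * Complex.I)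

/-- The absolute moments `I_n = ∫ |τ^n g(τ)| dτ` of the window. -/
def momentI (g : ℝ → ℝ) (n : ℕ) : ℝ := ∫ τ : ℝ, |τ| ^ n * |g τ|

/-- The `k`-th component `x_k(s) = A_k(s) e^{2πi φ_k(s)}`. -/
def xcomp (A φ : ℕ → ℝ → ℝ) (k : ℕ) (s : ℝ) : ℂ :=
  (A k s : ℂ) * Complex.exp ((2 * (π : ℂ) * φ k s) * Complex.I)

/-- `M(t) = Σ_{k=0}^K A_k(t)`. -/
def Msum (K : ℕ) (A : ℕ → ℝ → ℝ) (t : ℝ) : ℝ := ∑ k ∈ Finset.range (K + 1), A k t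

/-- `μ(t) = min_{0 ≤ k ≤ K} A_k(t)`. -/
def muMin (K : ℕ) (A : ℕ → ℝ → ℝ) (t : ℝ) : ℝ :=
  (Finset.range (K + 1)).inf' (by simp) fun k => A k t

/-- `λ_0(t) = ε1 I_1 σ(t) + π ε2 I_2 σ(t)²`. -/
def lam0 (g : ℝ → ℝ) (σ : ℝ → ℝ) (ε1 ε2 t : ℝ) : ℝ :=
  ε1 * momentI g 1 * σ t + π * ε2 * momentI g 2 * σ t ^ 2

/-- `err_ℓ(t) = M(t)λ_0(t) + Σ_{k≠ℓ} A_k(t) |ĝ(α(2|ℓ−k|−1))|`. -/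
def errl (K : ℕ) (A : ℕ → ℝ → ℝ) (g : ℝ → ℝ) (σ : ℝ → ℝ) (α ε1 ε2 : ℝ)
    (l : ℕ) (t : ℝ) : ℝ :=
  Msum K A t * lam0 g σ ε1 ε2 t +
    ∑ k ∈ (Finset.range (K + 1)).erase l,
      A k t * ‖hatg g (α * (2 * |(l : ℝ) - (k : ℝ)| - 1))‖

/-- `𝓖_t = {η : |Ṽ_x(t,η)| > ε̃1}`. -/
def Gt (x : ℝ → ℂ) (g : ℝ → ℝ) (σ : ℝ → ℝ) (t eps : ℝ) : Set ℝ :=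
  {η | eps < ‖aSTFT x g σ t η‖}

/-- `𝓖_{t,k} = {η ∈ 𝓖_t : |η − φ'_k(t)| < α/σ(t)}`. -/
def Gtk (x : ℝ → ℂ) (g : ℝ → ℝ) (σ : ℝ → ℝ) (φ : ℕ → ℝ → ℝ) (α t eps : ℝ)
    (k : ℕ) : Set ℝ :=
  {η | η ∈ Gt x g σ t eps ∧ |η - deriv (φ k) t| < α / σ t}

/-!
Near `t` every component is a linear chirp up to a relative error: `A_k(t + τ)` differs from
`A_k(t)` by at most `ε1 |τ| A_k(t)`, and `φ_k(t + τ)` from `φ_k(t) + φ'_k(t) τ` by at most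
`ε2 τ² / 2`. The adaptive STFT of the linear chirp is exactly the ridge
`A_k(t) e^{2πiφ_k(t)} ĝ(σ(t) (η - φ'_k(t)))`, so `Ṽ_x(t, η)` is the sum of these ridges up to
`M(t) λ_0(t)`. In the band `|η - φ'_ℓ(t)| < α / σ(t)` the separation condition pushes every other
ridge outside `supp ĝ ⊆ [-α, α]`. Since the maximiser `η̂_ℓ` beats `η = φ'_ℓ(t)`, where the ridge
has modulus `A_ℓ(t)`, this gives `|ĝ(σ(t) (η̂_ℓ - φ'_ℓ(t)))| ≥ 1 - 2 M(t) λ_0(t) / A_ℓ(t)`, and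
inverting `|ĝ|` on `[0, β]` by the intermediate value theorem yields the bound.
-/

section Window

variable {g : ℝ → ℝ} {w : ℝ}

lemma continuous_hatg (hg : Integrable g) : Continuous (hatg g) := by
  refine continuous_of_dominated (bound := fun τ => |g τ|) (fun ξ => ?_) (fun ξ => ?_) hg.abs
    (Filter.Eventually.of_forall fun τ => by fun_prop)
  · exact (Complex.continuous_ofReal.comp_aestronglyMeasurable hg.aestronglyMeasurable).mul
      (by fun_prop : Continuous _).aestronglyMeasurable
  · filter_upwards with τ
    simp [Complex.norm_exp]

lemma hatg_zero (hg : ∫ τ, g τ = 1) : hatg g 0 = 1 := by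
  simp only [hatg, Complex.ofReal_zero, mul_zero, zero_mul, neg_zero, Complex.exp_zero, mul_one]
  rw [integral_complex_ofReal, hg, Complex.ofReal_one]

lemma hatg_eq_zero_of_forall_lt {β : ℝ} (hg : Integrable g)
    (hsupp : ∀ ξ, β < ξ → hatg g ξ = 0) : hatg g β = 0 := by
  have hlim : Filter.Tendsto (hatg g) (nhdsWithin β (Set.Ioi β)) (nhds (hatg g β)) :=
    (continuous_hatg hg).continuousWithinAt
  refine tendsto_nhds_unique hlim (tendsto_const_nhds.congr' ?_)
  filter_upwards [self_mem_nhdsWithin] with ξ hξ using (hsupp ξ hξ).symm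

lemma hatg_mul_sub_eq_zero_of_separated {α η a b : ℝ} (hsupp : ∀ ξ, α < |ξ| → hatg g ξ = 0)
    (hw : 0 < w) (hη : |η - a| < α / w) (hab : 2 * α / w ≤ |a - b|) :
    hatg g (w * (η - b)) = 0 := by
  refine hsupp _ ?_
  have htri := abs_sub_abs_le_abs_sub (a - b) (η - b)
  rw [sub_sub_sub_cancel_right, abs_sub_comm a η] at htri
  rw [mul_div_assoc] at hab
  rw [abs_mul, abs_of_pos hw, ← div_lt_iff₀' hw]
  linarith

lemma le_of_leftInvOn_Icc {f inv : ℝ → ℝ} {a b v : ℝ} (hab : a ≤ b)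
    (hf : ContinuousOn f (Set.Icc a b)) (hinv : Set.LeftInvOn inv f (Set.Icc a b))
    (hv : v ∈ Set.Icc (f b) (f a)) : a ≤ inv v := by
  obtain ⟨ξ, hξ, rfl⟩ := intermediate_value_Icc' hab hf hv
  rw [hinv hξ]
  exact hξ.1

-- As `ĝ(β) = 0`, the intermediate value theorem on `[|ξ|, β]` yields a preimage of `v` under
-- `‖ĝ‖` lying beyond `|ξ|`, and `ginv` sends `v` to it.
lemma abs_le_of_le_norm_hatg {ginv : ℝ → ℝ} {β ξ v : ℝ} (hg : Integrable g)
    (hsupp : ∀ ξ, β < |ξ| → hatg g ξ = 0) (heven : ∀ ξ, ‖hatg g (-ξ)‖ = ‖hatg g ξ‖)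
    (hinv : ∀ ξ, 0 ≤ ξ → ξ ≤ β → ginv ‖hatg g ξ‖ = ξ) (hξ : hatg g ξ ≠ 0) (hv0 : 0 ≤ v)
    (hv : v ≤ ‖hatg g ξ‖) : |ξ| ≤ ginv v := by
  have hξβ : |ξ| ≤ β := not_lt.mp fun h => hξ (hsupp ξ h)
  have hβ : hatg g β = 0 := hatg_eq_zero_of_forall_lt hg fun ζ hζ =>
    hsupp ζ (hζ.trans_le (le_abs_self ζ))
  refine le_of_leftInvOn_Icc hξβ (continuous_hatg hg).norm.continuousOn
    (fun ζ hζ => hinv ζ ((abs_nonneg ξ).trans hζ.1) hζ.2) ⟨?_, ?_⟩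
  · rwa [hβ, norm_zero]
  · rcases abs_choice ξ with h | h <;> rw [h]
    · exact hv
    · rwa [heven]

lemma integral_abs_pow_mul_scaled_window (hw : 0 < w) (n : ℕ) :
    ∫ τ, |τ| ^ n * (w⁻¹ * |g (τ / w)|) = w ^ n * momentI g n := by
  have h : (fun τ => |τ| ^ n * (w⁻¹ * |g (τ / w)|)) =
      fun τ => w ^ n * w⁻¹ * (|τ / w| ^ n * |g (τ / w)|) := by
    funext τ
    rw [abs_div, abs_of_pos hw, div_pow]
    field_simp
  rw [h, integral_const_mul, Measure.integral_comp_div (fun u => |u| ^ n * |g u|), abs_of_pos hw,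
    smul_eq_mul, momentI]
  field_simp

lemma Integrable.abs_pow_mul_scaled_window {n : ℕ} (hg : Integrable fun τ => τ ^ n * g τ)
    (hw : 0 < w) : Integrable fun τ => |τ| ^ n * (w⁻¹ * |g (τ / w)|) := by
  refine ((hg.abs.comp_div hw.ne').const_mul (w ^ n * w⁻¹)).congr
    (Filter.Eventually.of_forall fun τ => ?_)
  simp only [abs_mul, abs_pow, abs_div, abs_of_pos hw, div_pow]
  field_simp

lemma Integrable.quadratic_mul_scaled_window (hg1 : Integrable fun τ => τ * g τ)
    (hg2 : Integrable fun τ => τ ^ 2 * g τ) (hw : 0 < w) (c1 c2 : ℝ) :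
    Integrable fun τ => (c1 * |τ| + c2 * τ ^ 2) * (w⁻¹ * |g (τ / w)|) := by
  have h1 := Integrable.abs_pow_mul_scaled_window (n := 1) (by simpa using hg1) hw
  have h2 := Integrable.abs_pow_mul_scaled_window (n := 2) hg2 hw
  refine ((h1.const_mul c1).add (h2.const_mul c2)).congr
    (Filter.Eventually.of_forall fun τ => ?_)
  simp only [Pi.add_apply, pow_one, sq_abs]
  ring

lemma integral_quadratic_mul_scaled_window (hg1 : Integrable fun τ => τ * g τ)
    (hg2 : Integrable fun τ => τ ^ 2 * g τ) (hw : 0 < w) (c1 c2 : ℝ) :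
    ∫ τ, (c1 * |τ| + c2 * τ ^ 2) * (w⁻¹ * |g (τ / w)|) =
      c1 * (w * momentI g 1) + c2 * (w ^ 2 * momentI g 2) := by
  have h1 := Integrable.abs_pow_mul_scaled_window (n := 1) (by simpa using hg1) hw
  have h2 := Integrable.abs_pow_mul_scaled_window (n := 2) hg2 hw
  have h : (fun τ => (c1 * |τ| + c2 * τ ^ 2) * (w⁻¹ * |g (τ / w)|)) =
      fun τ => c1 * (|τ| ^ 1 * (w⁻¹ * |g (τ / w)|)) + c2 * (|τ| ^ 2 * (w⁻¹ * |g (τ / w)|)) := by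
    funext τ
    rw [pow_one, sq_abs]
    ring
  rw [h, integral_add (h1.const_mul c1) (h2.const_mul c2), integral_const_mul,
    integral_const_mul, integral_abs_pow_mul_scaled_window hw,
    integral_abs_pow_mul_scaled_window hw, pow_one]

lemma integral_scaled_window_mul_exp (hw : 0 < w) (ξ : ℝ) :
    ∫ τ, ((w⁻¹ * g (τ / w) : ℝ) : ℂ) * Complex.exp (-(2 * π * ξ * τ) * Complex.I) =
      hatg g (w * ξ) := by
  have h : (fun τ : ℝ => ((w⁻¹ * g (τ / w) : ℝ) : ℂ) *
      Complex.exp (-(2 * π * ξ * τ) * Complex.I)) = fun τ => (w⁻¹ : ℂ) *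
        ((g (τ / w) : ℂ) * Complex.exp (-(2 * π * (w * ξ : ℝ) * (τ / w : ℝ)) * Complex.I)) := by
    funext τ
    have hscale : ((w * ξ : ℝ) : ℂ) * ((τ / w : ℝ) : ℂ) = ξ * τ := by
      have : (w : ℂ) ≠ 0 := Complex.ofReal_ne_zero.mpr hw.ne'
      push_cast
      field_simp
    rw [mul_assoc (2 * (π : ℂ)) ((w * ξ : ℝ) : ℂ), hscale]
    push_cast
    ring_nf
  rw [h, integral_const_mul, Measure.integral_comp_div
    (fun u : ℝ => (g u : ℂ) * Complex.exp (-(2 * π * (w * ξ : ℝ) * u) * Complex.I)),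
    abs_of_pos hw, Complex.real_smul, ← mul_assoc,
    inv_mul_cancel₀ (Complex.ofReal_ne_zero.mpr hw.ne'), one_mul]
  rfl

lemma integrable_scaled_window_mul_exp (hg : Integrable g) (hw : 0 < w) (ξ : ℝ) :
    Integrable fun τ =>
      ((w⁻¹ * g (τ / w) : ℝ) : ℂ) * Complex.exp (-(2 * π * ξ * τ) * Complex.I) := by
  refine Integrable.mono' ((hg.abs.comp_div hw.ne').const_mul w⁻¹)
    ((Complex.continuous_ofReal.comp_aestronglyMeasurable
      ((hg.comp_div hw.ne').const_mul w⁻¹).aestronglyMeasurable).mul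
      (by fun_prop : Continuous _).aestronglyMeasurable)
    (Filter.Eventually.of_forall fun τ => ?_)
  simp [Complex.norm_exp, abs_of_pos hw]

end Window

section Phase

lemma norm_exp_two_pi_mul_I_sub_le (a b : ℝ) :
    ‖Complex.exp (2 * π * a * Complex.I) - Complex.exp (2 * π * b * Complex.I)‖ ≤
      2 * π * |a - b| := by
  have h : Complex.exp (2 * π * a * Complex.I) - Complex.exp (2 * π * b * Complex.I) =
      Complex.exp (2 * π * b * Complex.I) *
        (Complex.exp (Complex.I * (2 * π * (a - b) : ℝ)) - 1) := by
    rw [mul_sub, mul_one, ← Complex.exp_add]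
    push_cast
    ring_nf
  have hb : ‖Complex.exp (2 * π * b * Complex.I)‖ = 1 := by simp [Complex.norm_exp]
  rw [h, norm_mul, hb, one_mul]
  calc _ ≤ ‖2 * π * (a - b)‖ := Real.norm_exp_I_mul_ofReal_sub_one_le
    _ = 2 * π * |a - b| := by rw [Real.norm_eq_abs, abs_mul, abs_of_pos two_pi_pos]

variable {f : ℝ → ℝ} {ε : ℝ}

lemma abs_deriv_sub_deriv_le (hf : ContDiff ℝ 2 f) (hf'' : ∀ s, |deriv (deriv f) s| ≤ ε)
    (u v : ℝ) : |deriv f u - deriv f v| ≤ ε * |u - v| := by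
  have hf' : Differentiable ℝ (deriv f) := (hf.iterate_deriv' 1 1).differentiable one_ne_zero
  simpa [Real.norm_eq_abs] using Convex.norm_image_sub_le_of_norm_deriv_le
    (fun s _ => hf' s) (fun s _ => by simpa [Real.norm_eq_abs] using hf'' s) convex_univ
    (Set.mem_univ v) (Set.mem_univ u)

lemma abs_sub_sub_deriv_mul_le (hf : ContDiff ℝ 2 f) (hf'' : ∀ s, |deriv (deriv f) s| ≤ ε)
    (t τ : ℝ) : |f (t + τ) - f t - deriv f t * τ| ≤ ε * τ ^ 2 / 2 := by
  have hdiff : Differentiable ℝ f := hf.differentiable two_ne_zero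
  -- the remainder along the segment from `t` to `t + τ`, parametrised by `u ∈ [0, 1]`, grows no
  -- faster than `ε τ² u² / 2`
  let ψ : ℝ → ℝ := fun u => f (t + u * τ) - f t - deriv f t * (u * τ)
  have hψ : ∀ u, HasDerivAt ψ ((deriv f (t + u * τ) - deriv f t) * τ) u := by
    intro u
    have hline : HasDerivAt (fun u : ℝ => t + u * τ) τ u := by
      simpa using ((hasDerivAt_id u).mul_const τ).const_add t
    have hlin : HasDerivAt (fun u : ℝ => deriv f t * (u * τ)) (deriv f t * τ) u := by
      simpa using ((hasDerivAt_id u).mul_const τ).const_mul (deriv f t)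
    exact ((((hdiff _).hasDerivAt.comp u hline).sub_const (f t)).sub hlin).congr_deriv (by ring)
  have hB : ∀ u, HasDerivAt (fun u : ℝ => ε * τ ^ 2 / 2 * u ^ 2) (ε * τ ^ 2 / 2 * (2 * u)) u := by
    intro u
    simpa using (hasDerivAt_pow 2 u).const_mul (ε * τ ^ 2 / 2)
  have hbound : ∀ u ∈ Set.Ico (0 : ℝ) 1,
      ‖(deriv f (t + u * τ) - deriv f t) * τ‖ ≤ ε * τ ^ 2 / 2 * (2 * u) := by
    intro u hu
    have hlip := abs_deriv_sub_deriv_le hf hf'' (t + u * τ) t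
    rw [add_sub_cancel_left, abs_mul, abs_of_nonneg hu.1] at hlip
    calc ‖(deriv f (t + u * τ) - deriv f t) * τ‖
        = |deriv f (t + u * τ) - deriv f t| * |τ| := by rw [Real.norm_eq_abs, abs_mul]
      _ ≤ ε * (u * |τ|) * |τ| := by gcongr
      _ = ε * τ ^ 2 / 2 * (2 * u) := by rw [mul_assoc, mul_assoc, ← sq_abs τ]; ring
  have key := image_norm_le_of_norm_deriv_right_le_deriv_boundary
    (fun u _ => (hψ u).continuousAt.continuousWithinAt) (fun u _ => (hψ u).hasDerivWithinAt)
    (by simp [ψ]) hB hbound (Set.right_mem_Icc.mpr zero_le_one)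
  simpa [ψ, Real.norm_eq_abs] using key

end Phase

def stftIntegrand (x : ℝ → ℂ) (g σ : ℝ → ℝ) (t η τ : ℝ) : ℂ :=
  x (t + τ) * (((σ t)⁻¹ * g (τ / σ t) : ℝ) : ℂ) *
    Complex.exp (-(2 * (π : ℂ) * η * τ) * Complex.I)

section STFT

variable {x y : ℝ → ℂ} {g σ : ℝ → ℝ} {t η : ℝ}

lemma aSTFT_eq_integral_stftIntegrand : aSTFT x g σ t η = ∫ τ, stftIntegrand x g σ t η τ :=
  rfl

lemma norm_stftIntegrand (hσ : 0 < σ t) (τ : ℝ) :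
    ‖stftIntegrand x g σ t η τ‖ = ‖x (t + τ)‖ * ((σ t)⁻¹ * |g (τ / σ t)|) := by
  simp [stftIntegrand, Complex.norm_exp, abs_of_pos hσ]

lemma aestronglyMeasurable_stftIntegrand (hx : Continuous x) (hg : Integrable g)
    (hσ : 0 < σ t) : AEStronglyMeasurable (stftIntegrand x g σ t η) :=
  ((hx.comp (continuous_const_add t)).aestronglyMeasurable.mul
    (Complex.continuous_ofReal.comp_aestronglyMeasurable
      ((hg.comp_div hσ.ne').const_mul _).aestronglyMeasurable)).mul
    (Continuous.aestronglyMeasurable (by fun_prop))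

lemma norm_stftIntegrand_sub_le {B : ℝ → ℝ} (hσ : 0 < σ t)
    (hxy : ∀ τ, ‖x (t + τ) - y (t + τ)‖ ≤ B τ) (τ : ℝ) :
    ‖stftIntegrand x g σ t η τ - stftIntegrand y g σ t η τ‖ ≤
      B τ * ((σ t)⁻¹ * |g (τ / σ t)|) := by
  have h : stftIntegrand x g σ t η τ - stftIntegrand y g σ t η τ =
      stftIntegrand (x - y) g σ t η τ := by
    simp only [stftIntegrand, Pi.sub_apply]
    ring
  rw [h, norm_stftIntegrand hσ, Pi.sub_apply]
  gcongr
  exact hxy τ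

lemma Integrable.stftIntegrand_of_norm_sub_le {B : ℝ → ℝ}
    (hy : Integrable (stftIntegrand y g σ t η)) (hx : Continuous x) (hg : Integrable g)
    (hσ : 0 < σ t) (hB : Integrable fun τ => B τ * ((σ t)⁻¹ * |g (τ / σ t)|))
    (hxy : ∀ τ, ‖x (t + τ) - y (t + τ)‖ ≤ B τ) : Integrable (stftIntegrand x g σ t η) := by
  refine (hy.add (hB.mono' ((aestronglyMeasurable_stftIntegrand hx hg hσ).sub
    hy.aestronglyMeasurable) (Filter.Eventually.of_forall
      (norm_stftIntegrand_sub_le hσ hxy)))).congr (Filter.Eventually.of_forall fun τ => ?_)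
  simp

lemma norm_aSTFT_sub_aSTFT_le {B : ℝ → ℝ} (hx : Integrable (stftIntegrand x g σ t η))
    (hy : Integrable (stftIntegrand y g σ t η)) (hσ : 0 < σ t)
    (hB : Integrable fun τ => B τ * ((σ t)⁻¹ * |g (τ / σ t)|))
    (hxy : ∀ τ, ‖x (t + τ) - y (t + τ)‖ ≤ B τ) :
    ‖aSTFT x g σ t η - aSTFT y g σ t η‖ ≤ ∫ τ, B τ * ((σ t)⁻¹ * |g (τ / σ t)|) := by
  rw [aSTFT_eq_integral_stftIntegrand, aSTFT_eq_integral_stftIntegrand, ← integral_sub hx hy]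
  exact norm_integral_le_of_norm_le hB
    (Filter.Eventually.of_forall (norm_stftIntegrand_sub_le hσ hxy))

lemma aSTFT_finset_sum {ι : Type*} (s : Finset ι) (f : ι → ℝ → ℂ)
    (hf : ∀ i ∈ s, Integrable (stftIntegrand (f i) g σ t η)) :
    aSTFT (fun u => ∑ i ∈ s, f i u) g σ t η = ∑ i ∈ s, aSTFT (f i) g σ t η := by
  simp only [aSTFT_eq_integral_stftIntegrand]
  rw [← integral_finsetSum s hf]
  simp only [stftIntegrand, Finset.sum_mul]

end STFT

def linearChirp (a φ₀ ν t s : ℝ) : ℂ :=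
  a * Complex.exp (2 * π * (φ₀ + ν * (s - t) : ℝ) * Complex.I)

section LinearChirp

variable {g σ : ℝ → ℝ} {a φ₀ ν t η : ℝ}

lemma stftIntegrand_linearChirp :
    stftIntegrand (linearChirp a φ₀ ν t) g σ t η = fun τ =>
      a * Complex.exp (2 * π * φ₀ * Complex.I) *
        ((((σ t)⁻¹ * g (τ / σ t) : ℝ) : ℂ) *
          Complex.exp (-(2 * π * (η - ν : ℝ) * τ) * Complex.I)) := by
  funext τ
  have hexp : Complex.exp (2 * π * (φ₀ + ν * (t + τ - t) : ℝ) * Complex.I) *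
      Complex.exp (-(2 * (π : ℂ) * η * τ) * Complex.I) =
      Complex.exp (2 * π * φ₀ * Complex.I) *
        Complex.exp (-(2 * π * (η - ν : ℝ) * τ) * Complex.I) := by
    rw [← Complex.exp_add, ← Complex.exp_add]
    push_cast
    ring_nf
  rw [stftIntegrand, linearChirp]
  linear_combination (a * (((σ t)⁻¹ * g (τ / σ t) : ℝ) : ℂ)) * hexp

lemma integrable_stftIntegrand_linearChirp (hg : Integrable g) (hσ : 0 < σ t) :
    Integrable (stftIntegrand (linearChirp a φ₀ ν t) g σ t η) := by
  rw [stftIntegrand_linearChirp]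
  exact (integrable_scaled_window_mul_exp hg hσ _).const_mul _

lemma aSTFT_linearChirp (hσ : 0 < σ t) :
    aSTFT (linearChirp a φ₀ ν t) g σ t η =
      a * Complex.exp (2 * π * φ₀ * Complex.I) * hatg g (σ t * (η - ν)) := by
  rw [aSTFT_eq_integral_stftIntegrand, stftIntegrand_linearChirp, integral_const_mul,
    integral_scaled_window_mul_exp hσ]

end LinearChirp

section Component

variable {A φ : ℕ → ℝ → ℝ} {k : ℕ} {ε1 ε2 t : ℝ} {g σ : ℝ → ℝ}

lemma norm_xcomp_sub_linearChirp_le (hAt : 0 ≤ A k t)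
    (hAlip : ∀ τ, |A k (t + τ) - A k t| ≤ ε1 * |τ| * A k t) (hφ : ContDiff ℝ 2 (φ k))
    (hφ'' : ∀ s, |deriv (deriv (φ k)) s| ≤ ε2) (τ : ℝ) :
    ‖xcomp A φ k (t + τ) - linearChirp (A k t) (φ k t) (deriv (φ k) t) t (t + τ)‖ ≤
      A k t * ε1 * |τ| + A k t * (π * ε2) * τ ^ 2 := by
  have hsplit : xcomp A φ k (t + τ) - linearChirp (A k t) (φ k t) (deriv (φ k) t) t (t + τ) =
      (A k (t + τ) - A k t : ℝ) * Complex.exp (2 * π * φ k (t + τ) * Complex.I) +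
        A k t * (Complex.exp (2 * π * φ k (t + τ) * Complex.I) -
          Complex.exp (2 * π * (φ k t + deriv (φ k) t * τ : ℝ) * Complex.I)) := by
    rw [xcomp, linearChirp, add_sub_cancel_left]
    push_cast
    ring
  have htaylor : |φ k (t + τ) - (φ k t + deriv (φ k) t * τ)| ≤ ε2 * τ ^ 2 / 2 := by
    rw [← sub_sub]
    exact abs_sub_sub_deriv_mul_le hφ hφ'' t τ
  have hphase := (norm_exp_two_pi_mul_I_sub_le (φ k (t + τ)) (φ k t + deriv (φ k) t * τ)).trans
    (mul_le_mul_of_nonneg_left htaylor two_pi_pos.le)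
  rw [hsplit]
  refine (norm_add_le _ _).trans ?_
  rw [norm_mul, norm_mul, Complex.norm_real, Complex.norm_real, Real.norm_eq_abs,
    Real.norm_of_nonneg hAt, show ‖Complex.exp (2 * π * φ k (t + τ) * Complex.I)‖ = 1 by
      simp [Complex.norm_exp], mul_one]
  nlinarith [hAlip τ, mul_le_mul_of_nonneg_left hphase hAt]

lemma integrable_stftIntegrand_xcomp (hAcont : Continuous (A k)) (hAt : 0 ≤ A k t)
    (hAlip : ∀ τ, |A k (t + τ) - A k t| ≤ ε1 * |τ| * A k t) (hφ : ContDiff ℝ 2 (φ k))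
    (hφ'' : ∀ s, |deriv (deriv (φ k)) s| ≤ ε2) (hgint : Integrable g)
    (hgI1 : Integrable fun τ => τ * g τ) (hgI2 : Integrable fun τ => τ ^ 2 * g τ)
    (hσ : 0 < σ t) (η : ℝ) : Integrable (stftIntegrand (xcomp A φ k) g σ t η) :=
  Integrable.stftIntegrand_of_norm_sub_le (integrable_stftIntegrand_linearChirp hgint hσ)
    (by unfold xcomp; have := hφ.continuous; fun_prop) hgint hσ
    (Integrable.quadratic_mul_scaled_window hgI1 hgI2 hσ _ _)
    (norm_xcomp_sub_linearChirp_le hAt hAlip hφ hφ'')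

lemma norm_aSTFT_xcomp_sub_le (hAcont : Continuous (A k)) (hAt : 0 ≤ A k t)
    (hAlip : ∀ τ, |A k (t + τ) - A k t| ≤ ε1 * |τ| * A k t) (hφ : ContDiff ℝ 2 (φ k))
    (hφ'' : ∀ s, |deriv (deriv (φ k)) s| ≤ ε2) (hgint : Integrable g)
    (hgI1 : Integrable fun τ => τ * g τ) (hgI2 : Integrable fun τ => τ ^ 2 * g τ)
    (hσ : 0 < σ t) (η : ℝ) :
    ‖aSTFT (xcomp A φ k) g σ t η -
        A k t * Complex.exp (2 * π * φ k t * Complex.I) * hatg g (σ t * (η - deriv (φ k) t))‖ ≤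
      A k t * lam0 g σ ε1 ε2 t := by
  rw [← aSTFT_linearChirp hσ]
  refine (norm_aSTFT_sub_aSTFT_le
    (integrable_stftIntegrand_xcomp hAcont hAt hAlip hφ hφ'' hgint hgI1 hgI2 hσ η)
    (integrable_stftIntegrand_linearChirp hgint hσ) hσ
    (Integrable.quadratic_mul_scaled_window hgI1 hgI2 hσ _ _)
    (norm_xcomp_sub_linearChirp_le hAt hAlip hφ hφ'')).trans_eq ?_
  rw [integral_quadratic_mul_scaled_window hgI1 hgI2 hσ, lam0]
  ring

end Component

lemma norm_aSTFT_sub_sum_le {K : ℕ} {A φ : ℕ → ℝ → ℝ} {ε1 ε2 t : ℝ} {x : ℝ → ℂ}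
    {g σ : ℝ → ℝ} (hx : ∀ s, x s = ∑ k ∈ Finset.range (K + 1), xcomp A φ k s)
    (hAcont : ∀ k ≤ K, Continuous (A k)) (hAt : ∀ k ≤ K, 0 ≤ A k t)
    (hAlip : ∀ k ≤ K, ∀ τ, |A k (t + τ) - A k t| ≤ ε1 * |τ| * A k t)
    (hφ : ∀ k ≤ K, ContDiff ℝ 2 (φ k)) (hφ'' : ∀ k ≤ K, ∀ s, |deriv (deriv (φ k)) s| ≤ ε2)
    (hgint : Integrable g) (hgI1 : Integrable fun τ => τ * g τ)
    (hgI2 : Integrable fun τ => τ ^ 2 * g τ) (hσ : 0 < σ t) (η : ℝ) :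
    ‖aSTFT x g σ t η - ∑ k ∈ Finset.range (K + 1),
        A k t * Complex.exp (2 * π * φ k t * Complex.I) * hatg g (σ t * (η - deriv (φ k) t))‖ ≤
      Msum K A t * lam0 g σ ε1 ε2 t := by
  have hK : ∀ k ∈ Finset.range (K + 1), k ≤ K := fun k hk =>
    Nat.lt_succ_iff.mp (Finset.mem_range.mp hk)
  rw [funext hx, aSTFT_finset_sum _ _ fun k hk =>
    integrable_stftIntegrand_xcomp (hAcont k (hK k hk)) (hAt k (hK k hk)) (hAlip k (hK k hk))
      (hφ k (hK k hk)) (hφ'' k (hK k hk)) hgint hgI1 hgI2 hσ η, ← Finset.sum_sub_distrib, Msum,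
    Finset.sum_mul]
  exact (norm_sum_le _ _).trans (Finset.sum_le_sum fun k hk =>
    norm_aSTFT_xcomp_sub_le (hAcont k (hK k hk)) (hAt k (hK k hk)) (hAlip k (hK k hk))
      (hφ k (hK k hk)) (hφ'' k (hK k hk)) hgint hgI1 hgI2 hσ η)

lemma norm_aSTFT_sub_ridge_le {K l : ℕ} {A φ : ℕ → ℝ → ℝ} {ε1 ε2 α t η : ℝ} {x : ℝ → ℂ}
    {g σ : ℝ → ℝ} (hx : ∀ s, x s = ∑ k ∈ Finset.range (K + 1), xcomp A φ k s)
    (hAcont : ∀ k ≤ K, Continuous (A k)) (hAt : ∀ k ≤ K, 0 ≤ A k t)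
    (hAlip : ∀ k ≤ K, ∀ τ, |A k (t + τ) - A k t| ≤ ε1 * |τ| * A k t)
    (hφ : ∀ k ≤ K, ContDiff ℝ 2 (φ k)) (hφ'' : ∀ k ≤ K, ∀ s, |deriv (deriv (φ k)) s| ≤ ε2)
    (hgint : Integrable g) (hgI1 : Integrable fun τ => τ * g τ)
    (hgI2 : Integrable fun τ => τ ^ 2 * g τ) (hsupp : ∀ ξ, α < |ξ| → hatg g ξ = 0)
    (hσ : 0 < σ t) (hsep : ∀ k ≤ K, k ≠ l → 2 * α / σ t ≤ |deriv (φ l) t - deriv (φ k) t|)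
    (hl : l ≤ K) (hη : |η - deriv (φ l) t| < α / σ t) :
    ‖aSTFT x g σ t η -
        A l t * Complex.exp (2 * π * φ l t * Complex.I) * hatg g (σ t * (η - deriv (φ l) t))‖ ≤
      Msum K A t * lam0 g σ ε1 ε2 t := by
  have h := norm_aSTFT_sub_sum_le hx hAcont hAt hAlip hφ hφ'' hgint hgI1 hgI2 hσ η
  rwa [Finset.sum_eq_single_of_mem l (Finset.mem_range.mpr (Nat.lt_succ_of_le hl))
    fun k hk hkl => by
      rw [hatg_mul_sub_eq_zero_of_separated hsupp hσ hη
        (hsep k (Nat.lt_succ_iff.mp (Finset.mem_range.mp hk)) hkl), mul_zero]] at h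

lemma le_sub_of_le_sub_pred {K : ℕ} {f : ℕ → ℝ} {c : ℝ} (hc : 0 ≤ c)
    (hstep : ∀ j, 1 ≤ j → j ≤ K → c ≤ f j - f (j - 1)) {k j : ℕ} (hkj : k < j) (hjK : j ≤ K) :
    c ≤ f j - f k := by
  induction j with
  | zero => omega
  | succ j ih =>
    have hlast := hstep (j + 1) (by omega) hjK
    rw [Nat.add_sub_cancel] at hlast
    rcases Nat.lt_succ_iff_lt_or_eq.mp hkj with hk | rfl
    · linarith [ih hk (by omega)]
    · exact hlast

lemma le_abs_sub_of_le_sub_pred {K : ℕ} {f : ℕ → ℝ} {c : ℝ} (hc : 0 ≤ c)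
    (hstep : ∀ j, 1 ≤ j → j ≤ K → c ≤ f j - f (j - 1)) {k l : ℕ} (hk : k ≤ K) (hl : l ≤ K)
    (hkl : k ≠ l) : c ≤ |f l - f k| := by
  rcases hkl.lt_or_gt with h | h
  · exact (le_sub_of_le_sub_pred hc hstep h hl).trans (le_abs_self _)
  · rw [abs_sub_comm]
    exact (le_sub_of_le_sub_pred hc hstep h hk).trans (le_abs_self _)

lemma two_mul_div_le_deriv_sub_deriv_pred {K : ℕ} {φ : ℕ → ℝ → ℝ} {σ : ℝ → ℝ} {α t : ℝ}
    (hφ0 : ∀ s, φ 0 s = 0) (hφ'pos : ∀ k, 1 ≤ k → k ≤ K → ∃ c > 0, ∀ s, c ≤ deriv (φ k) s)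
    (hfreq : ∃ d > 0, ∀ k, 2 ≤ k → k ≤ K → ∀ s, d ≤ deriv (φ k) s - deriv (φ (k - 1)) s)
    (hsep : ∀ k, 1 ≤ k → k ≤ K → 2 * α / (deriv (φ k) t - deriv (φ (k - 1)) t) ≤ σ t)
    (hσ : 0 < σ t) (j : ℕ) (hj1 : 1 ≤ j) (hjK : j ≤ K) :
    2 * α / σ t ≤ deriv (φ j) t - deriv (φ (j - 1)) t := by
  have hgap : 0 < deriv (φ j) t - deriv (φ (j - 1)) t := by
    rcases hj1.eq_or_lt with rfl | hj2
    · obtain ⟨c, hc, hcle⟩ := hφ'pos 1 le_rfl hjK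
      simp [funext hφ0, hc.trans_le (hcle t)]
    · obtain ⟨d, hd, hdle⟩ := hfreq
      exact hd.trans_le (hdle j hj2 hjK t)
  exact (div_le_comm₀ hgap hσ).mp (hsep j hj1 hjK)

lemma norm_aSTFT_le_of_isMax {x : ℝ → ℂ} {g σ : ℝ → ℝ} {φ : ℕ → ℝ → ℝ} {α t ε η ηhat : ℝ}
    {l : ℕ} (hmem : ηhat ∈ Gtk x g σ φ α t ε l)
    (hmax : ∀ η ∈ Gtk x g σ φ α t ε l, ‖aSTFT x g σ t η‖ ≤ ‖aSTFT x g σ t ηhat‖)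
    (hη : |η - deriv (φ l) t| < α / σ t) : ‖aSTFT x g σ t η‖ ≤ ‖aSTFT x g σ t ηhat‖ := by
  by_contra! h
  exact h.not_ge (hmax η ⟨hmem.1.trans h, hη⟩)

-- Compare `‖V ηhat‖ ≥ ‖V ν‖ ≥ ‖c‖ - E` with `‖V ηhat‖ ≤ ‖c‖ ‖ĝ(w (ηhat - ν))‖ + E`.
lemma abs_sub_le_of_norm_sub_ridge_le {g ginv : ℝ → ℝ} {V : ℝ → ℂ} {c : ℂ}
    {a β w ν r E ηhat : ℝ}
    (hg : Integrable g) (hgnorm : ∫ τ, g τ = 1) (hsupp : ∀ ξ, β < |ξ| → hatg g ξ = 0)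
    (heven : ∀ ξ, ‖hatg g (-ξ)‖ = ‖hatg g ξ‖)
    (hinv : ∀ ξ, 0 ≤ ξ → ξ ≤ β → ginv ‖hatg g ξ‖ = ξ) (hw : 0 < w) (hr : 0 < r)
    (hc : ‖c‖ = a) (ha : 0 < a) (hridge : ∀ η, |η - ν| < r → ‖V η - c * hatg g (w * (η - ν))‖ ≤ E)
    (hband : |ηhat - ν| < r) (hmax : ∀ η, |η - ν| < r → ‖V η‖ ≤ ‖V ηhat‖)
    (hlevel : E < ‖V ηhat‖) (hE : 2 * E ≤ a) :
    |ηhat - ν| ≤ w⁻¹ * ginv (1 - 2 * E / a) := by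
  subst hc
  have hν : |ν - ν| < r := by simpa using hr
  have hlow : ‖c‖ - E ≤ ‖V ηhat‖ := by
    have h := hridge ν hν
    rw [sub_self, mul_zero, hatg_zero hgnorm, mul_one, norm_sub_rev] at h
    linarith [norm_sub_norm_le c (V ν), hmax ν hν]
  have hup : ‖V ηhat‖ ≤ ‖c‖ * ‖hatg g (w * (ηhat - ν))‖ + E := by
    have := norm_sub_norm_le (V ηhat) (c * hatg g (w * (ηhat - ν)))
    rw [norm_mul] at this
    linarith [hridge ηhat hband]
  have hne : hatg g (w * (ηhat - ν)) ≠ 0 := fun h0 => by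
    rw [h0, norm_zero, mul_zero, zero_add] at hup
    linarith
  have hv0 : 0 ≤ 1 - 2 * E / ‖c‖ := by
    rwa [sub_nonneg, div_le_one ha]
  have hv : 1 - 2 * E / ‖c‖ ≤ ‖hatg g (w * (ηhat - ν))‖ := by
    rw [← mul_le_mul_iff_right₀ ha]
    field_simp
    linarith
  calc |ηhat - ν| = w⁻¹ * |w * (ηhat - ν)| := by
        rw [abs_mul, abs_of_pos hw, inv_mul_cancel_left₀ hw.ne']
    _ ≤ _ := by
        gcongr
        exact abs_le_of_le_norm_hatg hg hsupp heven hinv hne hv0 hv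

theorem cor2_1b_general (K : ℕ) (A φ : ℕ → ℝ → ℝ) (ε1 ε2 : ℝ) (x : ℝ → ℂ)
    (g : ℝ → ℝ) (σ : ℝ → ℝ) (α t epst : ℝ)
    (hε2 : 0 < ε2)
    (hAreg : ∀ k ≤ K, ContDiff ℝ 1 (A k))
    (hφreg : ∀ k ≤ K, ContDiff ℝ 2 (φ k))
    (hφ0 : ∀ s, φ 0 s = 0)
    (hApos : ∀ k ≤ K, ∀ s, 0 < A k s)
    (hφ'pos : ∀ k, 1 ≤ k → k ≤ K → ∃ c > 0, ∀ s, c ≤ deriv (φ k) s)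
    (hfreq : ∃ d > 0, ∀ k, 2 ≤ k → k ≤ K → ∀ s, d ≤ deriv (φ k) s - deriv (φ (k - 1)) s)
    (hAlip : ∀ k ≤ K, ∀ s τ, |A k (s + τ) - A k s| ≤ ε1 * |τ| * A k s)
    (hφ'' : ∀ k, 1 ≤ k → k ≤ K → ∀ s, |deriv (deriv (φ k)) s| ≤ ε2)
    (hx : ∀ s, x s = ∑ k ∈ Finset.range (K + 1), xcomp A φ k s)
    (hgint : Integrable g)
    (hgI1 : Integrable fun τ : ℝ => τ * g τ)
    (hgI2 : Integrable fun τ : ℝ => τ ^ 2 * g τ)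
    (hgnorm : (∫ τ : ℝ, g τ) = 1)
    (β : ℝ)
    (hgeven : ∀ ξ, ‖hatg g (-ξ)‖ = ‖hatg g ξ‖)
    (hsuppβ : ∀ ξ, β < |ξ| → hatg g ξ = 0)
    (hα : 0 < α)
    (hsuppα : ∀ ξ, α < |ξ| → hatg g ξ = 0)
    (hσ : ∀ s, 0 < σ s)
    (hsep : ∀ s, ∀ k, 1 ≤ k → k ≤ K →
      2 * α / (deriv (φ k) s - deriv (φ (k - 1)) s) ≤ σ s)
    (hmain : 2 * Msum K A t * lam0 g σ ε1 ε2 t ≤ muMin K A t)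
    (heps1 : Msum K A t * lam0 g σ ε1 ε2 t ≤ epst)
    (ginv : ℝ → ℝ)
    (hginvβ : ∀ ξ, 0 ≤ ξ → ξ ≤ β → ginv ‖hatg g ξ‖ = ξ)
    (ηhat : ℕ → ℝ)
    (hηmem : ∀ l, 1 ≤ l → l ≤ K → ηhat l ∈ Gtk x g σ φ α t epst l)
    (hηmax : ∀ l, 1 ≤ l → l ≤ K → ∀ η ∈ Gtk x g σ φ α t epst l,
      ‖aSTFT x g σ t η‖ ≤ ‖aSTFT x g σ t (ηhat l)‖)
    :
    ∀ l, 1 ≤ l → l ≤ K →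
      |ηhat l - deriv (φ l) t| ≤
        (σ t)⁻¹ * ginv (1 - 2 * Msum K A t * lam0 g σ ε1 ε2 t / A l t) := by
  intro l hl1 hlK
  have hσt := hσ t
  have hφ''all : ∀ k ≤ K, ∀ s, |deriv (deriv (φ k)) s| ≤ ε2 := fun k hk s => by
    rcases Nat.eq_zero_or_pos k with rfl | hk1
    · simpa [funext hφ0] using hε2.le
    · exact hφ'' k hk1 hk s
  have hsepl : ∀ k ≤ K, k ≠ l → 2 * α / σ t ≤ |deriv (φ l) t - deriv (φ k) t| :=
    fun k hk hkl => le_abs_sub_of_le_sub_pred (by positivity)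
      (two_mul_div_le_deriv_sub_deriv_pred hφ0 hφ'pos hfreq (hsep t) hσt) hk hlK hkl
  have hnorm : ‖(A l t : ℂ) * Complex.exp (2 * π * φ l t * Complex.I)‖ = A l t := by
    simp [Complex.norm_exp, (hApos l hlK t).le]
  have hμ : muMin K A t ≤ A l t :=
    Finset.inf'_le _ (Finset.mem_range.mpr (Nat.lt_succ_of_le hlK))
  rw [mul_assoc]
  exact abs_sub_le_of_norm_sub_ridge_le hgint hgnorm hsuppβ hgeven hginvβ hσt (div_pos hα hσt)
    hnorm (hApos l hlK t)
    (fun η hη => norm_aSTFT_sub_ridge_le hx (fun k hk => (hAreg k hk).continuous)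
      (fun k hk => (hApos k hk t).le) (fun k hk => hAlip k hk t) hφreg hφ''all hgint hgI1 hgI2
      hsuppα hσt hsepl hlK hη)
    (hηmem l hl1 hlK).2
    (fun η hη => norm_aSTFT_le_of_isMax (hηmem l hl1 hlK) (hηmax l hl1 hlK) hη)
    (heps1.trans_lt (hηmem l hl1 hlK).1) (by linarith)

theorem cor2_1b (K : ℕ) (A φ : ℕ → ℝ → ℝ) (ε1 ε2 : ℝ) (x : ℝ → ℂ)
    (g : ℝ → ℝ) (σ : ℝ → ℝ) (α t epst : ℝ)
    (hε1 : 0 < ε1) (hε2 : 0 < ε2)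
    (hAreg : ∀ k ≤ K, ContDiff ℝ 1 (A k))
    (hAbdd : ∀ k ≤ K, ∃ C, ∀ s, |A k s| ≤ C)
    (hφreg : ∀ k ≤ K, ContDiff ℝ 2 (φ k))
    (hφ0 : ∀ s, φ 0 s = 0)
    (hApos : ∀ k ≤ K, ∀ s, 0 < A k s)
    (hφ'pos : ∀ k, 1 ≤ k → k ≤ K → ∃ c > 0, ∀ s, c ≤ deriv (φ k) s)
    (hφ'bdd : ∀ k, 1 ≤ k → k ≤ K → ∃ C, ∀ s, deriv (φ k) s ≤ C)
    (hfreq : ∃ d > 0, ∀ k, 2 ≤ k → k ≤ K → ∀ s, d ≤ deriv (φ k) s - deriv (φ (k - 1)) s)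
    (hAlip : ∀ k ≤ K, ∀ s τ, |A k (s + τ) - A k s| ≤ ε1 * |τ| * A k s)
    (hφ'' : ∀ k, 1 ≤ k → k ≤ K → ∀ s, |deriv (deriv (φ k)) s| ≤ ε2)
    (hx : ∀ s, x s = ∑ k ∈ Finset.range (K + 1), xcomp A φ k s)
    (hgint : Integrable g)
    (hgL2 : MemLp g 2 (volume : Measure ℝ))
    (hgI1 : Integrable fun τ : ℝ => τ * g τ)
    (hgI2 : Integrable fun τ : ℝ => τ ^ 2 * g τ)
    (hgnorm : (∫ τ : ℝ, g τ) = 1)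
    (β : ℝ) (hβ : 0 < β)
    (hgeven : ∀ ξ, ‖hatg g (-ξ)‖ = ‖hatg g ξ‖)
    (hgdecβ : ∀ ξ1 ξ2, 0 ≤ ξ1 → ξ1 ≤ ξ2 → ξ2 ≤ β → ‖hatg g ξ2‖ ≤ ‖hatg g ξ1‖)
    (hsuppβ : ∀ ξ, β < |ξ| → hatg g ξ = 0)
    (hα : 0 < α)
    (hsuppα : ∀ ξ, α < |ξ| → hatg g ξ = 0)
    (hσ : ∀ s, 0 < σ s)
    (hsep : ∀ s, ∀ k, 1 ≤ k → k ≤ K →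
      2 * α / (deriv (φ k) s - deriv (φ (k - 1)) s) ≤ σ s)
    (hmain : 2 * Msum K A t * lam0 g σ ε1 ε2 t ≤ muMin K A t)
    (heps1 : Msum K A t * lam0 g σ ε1 ε2 t ≤ epst)
    (heps2 : epst ≤ muMin K A t - Msum K A t * lam0 g σ ε1 ε2 t)
    (ginv : ℝ → ℝ)
    (hginvβ : ∀ ξ, 0 ≤ ξ → ξ ≤ β → ginv ‖hatg g ξ‖ = ξ)
    (ηhat : ℕ → ℝ)
    (hηmem : ∀ l, 1 ≤ l → l ≤ K → ηhat l ∈ Gtk x g σ φ α t epst l)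
    (hηmax : ∀ l, 1 ≤ l → l ≤ K → ∀ η ∈ Gtk x g σ φ α t epst l,
      ‖aSTFT x g σ t η‖ ≤ ‖aSTFT x g σ t (ηhat l)‖)
    :
    ∀ l, 1 ≤ l → l ≤ K →
      |ηhat l - deriv (φ l) t| ≤
        (σ t)⁻¹ * ginv (1 - 2 * Msum K A t * lam0 g σ ε1 ε2 t / A l t) :=
  cor2_1b_general K A φ ε1 ε2 x g σ α t epst hε2 hAreg hφreg hφ0 hApos hφ'pos hfreq hAlip hφ'' hx
    hgint hgI1 hgI2 hgnorm β hgeven hsuppβ hα hsuppα hσ hsep hmain heps1 ginv hginvβ ηhat hηmem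
    hηmax
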